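/- arXiv:2503.21715 — 4 statements merged into one kernel-verified Lean document; each statement's English description precedes it below -/
import Mathlib

section
/- Let U_1, U_2 be i.i.d. uniform random variables on [0,1] and W_1 = 2 - 3|U_2 - U_1| - 6 U_1 (1 - U_1). Then E[W_1^2] = 1/2. -/
/-!
Integrating out `U₂` first: for fixed `U₁ = x`, the substitution `t = |U₂ - x|` turns the inner
integral into two integrals of `(A - 3t)²` with `A = 2 - 6x(1 - x)`, over `[0, x]` and `[0, 1 - x]`,
and these add up to exactly `A / 2`. Since `E[U₁(1 - U₁)] = 1/6`, this gives `E[W₁²] = 1 - 3/6`.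
-/

open MeasureTheory ProbabilityTheory intervalIntegral Set

theorem ProbabilityTheory.IndepFun.integral_comp_prodMk {Ω α β E : Type*} [MeasurableSpace Ω]
    [MeasurableSpace α] [MeasurableSpace β] [NormedAddCommGroup E] [NormedSpace ℝ E]
    {P : Measure Ω} [IsFiniteMeasure P] {X : Ω → α} {Y : Ω → β} (hX : Measurable X)
    (hY : Measurable Y) (hXY : IndepFun X Y P) {f : α × β → E}
    (hf : AEStronglyMeasurable f ((P.map X).prod (P.map Y))) :
    ∫ ω, f (X ω, Y ω) ∂P = ∫ p, f p ∂((P.map X).prod (P.map Y)) := by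
  rw [← (indepFun_iff_map_prod_eq_prod_map_map hX.aemeasurable hY.aemeasurable).mp hXY] at hf ⊢
  exact (integral_map (hX.prodMk hY).aemeasurable hf).symm

theorem integral_Icc_eq_intervalIntegral {E : Type*} [NormedAddCommGroup E] [NormedSpace ℝ E]
    {μ : Measure ℝ} [NullSingletonClass μ] (f : ℝ → E) {a b : ℝ} (hab : a ≤ b) :
    ∫ x in Icc a b, f x ∂μ = ∫ x in a..b, f x ∂μ := by
  rw [integral_Icc_eq_integral_Ioc, integral_of_le hab]

theorem integral_prod_restrict_Icc {E : Type*} [NormedAddCommGroup E] [NormedSpace ℝ E]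
    {f : ℝ × ℝ → E} (hf : Continuous f) {a b c d : ℝ} (hab : a ≤ b) (hcd : c ≤ d) :
    ∫ p, f p ∂((volume.restrict (Icc a b)).prod (volume.restrict (Icc c d)))
      = ∫ x in a..b, ∫ y in c..d, f (x, y) := by
  rw [Measure.prod_restrict,
    setIntegral_prod f (hf.continuousOn.integrableOn_compact (isCompact_Icc.prod isCompact_Icc)),
    integral_Icc_eq_intervalIntegral _ hab]
  simp only [integral_Icc_eq_intervalIntegral _ hcd]

theorem integral_comp_abs_sub {E : Type*} [NormedAddCommGroup E] [NormedSpace ℝ E]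
    {g : ℝ → E} (hg : Continuous g) {a b x : ℝ} (hx : x ∈ Icc a b) :
    ∫ y in a..b, g |y - x| = (∫ t in 0..x - a, g t) + ∫ t in 0..b - x, g t := by
  have hint : ∀ c d : ℝ, IntervalIntegrable (fun y => g |y - x|) volume c d := fun c d =>
    (hg.comp (continuous_id.sub continuous_const).abs).intervalIntegrable c d
  have left : ∫ y in a..x, g |y - x| = ∫ y in a..x, g (x - y) :=
    integral_congr fun y hy => by
      rw [uIcc_of_le hx.1] at hy
      rw [abs_sub_comm, abs_of_nonneg (sub_nonneg.mpr hy.2)]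
  have right : ∫ y in x..b, g |y - x| = ∫ y in x..b, g (y - x) :=
    integral_congr fun y hy => by
      rw [uIcc_of_le hx.2] at hy
      rw [abs_of_nonneg (sub_nonneg.mpr hy.1)]
  rw [← integral_add_adjacent_intervals (hint a x) (hint x b), left, right,
    integral_comp_sub_left, integral_comp_sub_right, sub_self]

theorem integral_sq_sub_mul (A c s : ℝ) :
    ∫ t in (0 : ℝ)..s, (A - c * t) ^ 2 = A ^ 2 * s - c * A * s ^ 2 + c ^ 2 * s ^ 3 / 3 := by
  have expand : ∀ t, (A - c * t) ^ 2 = A ^ 2 - (2 * A * c) * t + c ^ 2 * t ^ 2 := fun t => by ring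
  simp only [expand]
  rw [intervalIntegral.integral_add, intervalIntegral.integral_sub,
    intervalIntegral.integral_const_mul, intervalIntegral.integral_const_mul]
  · simp
    ring
  all_goals exact Continuous.intervalIntegrable (by fun_prop) _ _

/-- The paper's `W₁` as a function of `(U₁, U₂)`, which are `U 0`, `U 1` in the statement. -/
def W (u₁ u₂ : ℝ) : ℝ := 2 - 3 * |u₂ - u₁| - 6 * u₁ * (1 - u₁)

theorem continuous_W : Continuous fun p : ℝ × ℝ => W p.1 p.2 := by
  unfold W
  fun_prop

theorem integral_W_sq_right {x : ℝ} (hx : x ∈ Icc (0 : ℝ) 1) :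
    ∫ y in (0 : ℝ)..1, W x y ^ 2 = (2 - 6 * x * (1 - x)) / 2 := by
  set A := 2 - 6 * x * (1 - x)
  have hW : ∀ y, W x y ^ 2 = (A - 3 * |y - x|) ^ 2 := fun y => by
    simp only [W, A]
    ring
  simp only [hW]
  rw [integral_comp_abs_sub (g := fun t => (A - 3 * t) ^ 2) (by fun_prop) hx,
    integral_sq_sub_mul, integral_sq_sub_mul]
  ring

/-- If `U 0, U 1` are i.i.d. uniform on `[0,1]` and
`W₁ = 2 - 3|U 1 - U 0| - 6 U 0 (1 - U 0)`, then `E[W₁²] = 1/2`. -/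
theorem expectation_W_sq
    {Ω : Type*} [MeasurableSpace Ω] (P : Measure Ω) [IsProbabilityMeasure P]
    (U : Fin 2 → Ω → ℝ) (hmeas : ∀ i, Measurable (U i))
    (hindep : iIndepFun U P)
    (hunif : ∀ i, Measure.map (U i) P = volume.restrict (Set.Icc (0:ℝ) 1)) :
    ∫ ω, (2 - 3 * |U 1 ω - U 0 ω| - 6 * U 0 ω * (1 - U 0 ω)) ^ 2 ∂P = 1 / 2 := by
  have hW : Continuous fun p : ℝ × ℝ => W p.1 p.2 ^ 2 := continuous_W.pow 2
  calc ∫ ω, (2 - 3 * |U 1 ω - U 0 ω| - 6 * U 0 ω * (1 - U 0 ω)) ^ 2 ∂P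
      = ∫ p, W p.1 p.2 ^ 2 ∂((P.map (U 0)).prod (P.map (U 1))) :=
        (hindep.indepFun (by decide)).integral_comp_prodMk (hmeas 0) (hmeas 1)
          hW.aestronglyMeasurable
    _ = ∫ x in (0 : ℝ)..1, ∫ y in (0 : ℝ)..1, W x y ^ 2 := by
        rw [hunif 0, hunif 1]
        exact integral_prod_restrict_Icc hW zero_le_one zero_le_one
    _ = ∫ x in (0 : ℝ)..1, (2 - 6 * x * (1 - x)) / 2 :=
        integral_congr fun x hx => integral_W_sq_right (by rwa [uIcc_of_le zero_le_one] at hx)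
    _ = ∫ x in (0 : ℝ)..1, (1 - 3 * x + 3 * x ^ 2) := integral_congr fun x _ => by ring
    _ = 1 / 2 := by
        rw [intervalIntegral.integral_add, intervalIntegral.integral_sub,
          intervalIntegral.integral_const_mul, intervalIntegral.integral_const_mul]
        · norm_num
        all_goals exact Continuous.intervalIntegrable (by fun_prop) _ _
end

section
/- Let U_1, ..., U_5 be i.i.d. uniform on [0,1] and W_i = 2 - 3|U_{i+1} - U_i| - 6 U_i(1 - U_i) for i = 1, ..., 4. Then E[W_1 W_2 W_3 W_4] = 1/700. -/
/-! The product `W₁ W₂ W₃ W₄` is the weight `∏ w(Uᵢ, Uᵢ₊₁)` of the path of the i.i.d. sequence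
`U`, so Fubini and independence turn its expectation into `∫₀¹ T⁴ 1`, where
`T g (x) = ∫₀¹ w(x, y) g(y) dy`. Since
`∫₀¹ |y - x| yᵏ dy = 2 x^(k+2) / ((k+1)(k+2)) - x / (k+1) + 1 / (k+2)` for `x ∈ [0, 1]`,
`T` maps polynomials to polynomials, and `T⁴ 1` is an explicit polynomial of degree 8 with
integral `1/700`. Clamping the `Uᵢ` to the unit interval, which changes them only on a null set,
makes the kernel `w` bounded. -/

open MeasureTheory ProbabilityTheory

section MarkovChain

variable {α : Type*} {W : α → α → ℝ} {C : ℝ}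

def pathWeight (W : α → α → ℝ) {n : ℕ} (x : Fin (n + 1) → α) : ℝ :=
  ∏ i : Fin n, W (x i.castSucc) (x i.succ)

lemma pathWeight_snoc {n : ℕ} (x : Fin (n + 1) → α) (a : α) :
    pathWeight W (Fin.snoc x a : Fin (n + 2) → α) = pathWeight W x * W (x (Fin.last n)) a := by
  simp only [pathWeight, Fin.prod_univ_castSucc, Fin.snoc_castSucc, Fin.succ_castSucc,
    Fin.succ_last, Fin.snoc_last]

lemma norm_pathWeight_le (hWC : ∀ x y, ‖W x y‖ ≤ C) {n : ℕ} (x : Fin (n + 1) → α) :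
    ‖pathWeight W x‖ ≤ C ^ n := by
  rw [pathWeight, norm_prod]
  simpa using Finset.prod_le_prod (s := Finset.univ) (fun i _ => norm_nonneg _)
    (fun (i : Fin n) _ => hWC (x i.castSucc) (x i.succ))

variable [MeasurableSpace α]

lemma measurable_pathWeight (hW : Measurable (Function.uncurry W)) (n : ℕ) :
    Measurable (pathWeight W : (Fin (n + 1) → α) → ℝ) :=
  Finset.measurable_prod _ fun i _ =>
    hW.comp (f := fun x : Fin (n + 1) → α => (x i.castSucc, x i.succ)) (by fun_prop)

noncomputable def integralOperator (μ : Measure α) (W : α → α → ℝ) (g : α → ℝ) (x : α) : ℝ :=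
  ∫ y, W x y * g y ∂μ

lemma measurable_integralOperator (μ : Measure α) [SFinite μ]
    (hW : Measurable (Function.uncurry W)) {g : α → ℝ}
    (hg : Measurable g) : Measurable (integralOperator μ W g) :=
  (hW.mul (hg.comp measurable_snd)).stronglyMeasurable.integral_prod_right'.measurable

variable (μ : Measure α) [IsProbabilityMeasure μ]

lemma norm_integralOperator_le (hWC : ∀ x y, ‖W x y‖ ≤ C) {g : α → ℝ} {B : ℝ}
    (hgB : ∀ y, ‖g y‖ ≤ B) (x : α) : ‖integralOperator μ W g x‖ ≤ C * B := by
  rw [integralOperator]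
  simpa using norm_integral_le_of_norm_le_const (μ := μ)
    (.of_forall fun y => norm_mul_le_of_le (hWC x y) (hgB y))

theorem integral_pathWeight_mul (hW : Measurable (Function.uncurry W))
    (hWC : ∀ x y, ‖W x y‖ ≤ C) (n : ℕ) {g : α → ℝ} (hg : Measurable g) {B : ℝ}
    (hgB : ∀ y, ‖g y‖ ≤ B) :
    ∫ x, pathWeight W x * g (x (Fin.last n)) ∂Measure.pi (fun _ => μ) =
      ∫ x, (integralOperator μ W)^[n] g x ∂μ := by
  induction n generalizing g B with
  | zero => simpa [pathWeight] using integral_comp_eval hg.aestronglyMeasurable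
  | succ n ih =>
    have hint : Integrable (fun p : α × (Fin (n + 1) → α) =>
        pathWeight W p.2 * (W (p.2 (Fin.last n)) p.1 * g p.1))
        (μ.prod (Measure.pi fun _ => μ)) := by
      refine .of_bound ?_ (C ^ n * (C * B)) (.of_forall fun p =>
        norm_mul_le_of_le (norm_pathWeight_le hWC p.2) (norm_mul_le_of_le (hWC _ _) (hgB _)))
      exact ((measurable_pathWeight hW n).comp measurable_snd |>.mul
        ((hW.comp (((measurable_pi_apply _).comp measurable_snd).prodMk measurable_fst)).mul
          (hg.comp measurable_fst))).aestronglyMeasurable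
    calc ∫ x, pathWeight W x * g (x (Fin.last (n + 1))) ∂Measure.pi (fun _ => μ)
        = ∫ p : α × (Fin (n + 1) → α), pathWeight W p.2 * (W (p.2 (Fin.last n)) p.1 * g p.1)
            ∂(μ.prod (Measure.pi fun _ => μ)) := by
          rw [← ((measurePreserving_piFinSuccAbove (fun _ => μ) (Fin.last (n + 1))).symm
            _).integral_comp']
          refine integral_congr_ae (.of_forall fun p => ?_)
          simp only [MeasurableEquiv.piFinSuccAbove_symm_apply, Fin.insertNthEquiv_last]
          change pathWeight W (Fin.snoc p.2 p.1 : Fin (n + 2) → α) *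
            g (Fin.snoc (α := fun _ => α) p.2 p.1 (Fin.last (n + 1))) = _
          rw [pathWeight_snoc, Fin.snoc_last, mul_assoc]
      _ = ∫ t, pathWeight W t * integralOperator μ W g (t (Fin.last n))
            ∂Measure.pi fun _ => μ := by
          rw [integral_prod_symm _ hint]
          simp only [integral_const_mul, integralOperator]
      _ = ∫ x, (integralOperator μ W)^[n + 1] g x ∂μ := by
          rw [ih (measurable_integralOperator μ hW hg) (norm_integralOperator_le μ hWC hgB),
            Function.iterate_succ_apply]

end MarkovChain

open Set unitInterval

def weight (x y : ℝ) : ℝ := 2 - 3 * |y - x| - 6 * x * (1 - x)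

def polyEval {n : ℕ} (c : Fin n → ℝ) (x : ℝ) : ℝ := ∑ k, c k * x ^ (k : ℕ)

lemma integral_polyEval {n : ℕ} (c : Fin n → ℝ) :
    ∫ x in (0 : ℝ)..1, polyEval c x = ∑ k, c k / (k + 1) := by
  simp only [polyEval]
  rw [intervalIntegral.integral_finsetSum fun k _ =>
    (by fun_prop : Continuous _).intervalIntegrable _ _]
  simp [integral_pow, div_eq_mul_inv]

lemma integral_abs_sub_mul_pow {x : ℝ} (hx : x ∈ Icc 0 1) (k : ℕ) :
    ∫ y in (0 : ℝ)..1, |y - x| * y ^ k =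
      2 * x ^ (k + 2) / ((k + 1) * (k + 2)) - x / (k + 1) + 1 / (k + 2) := by
  have hcont : Continuous fun y : ℝ => |y - x| * y ^ k := by fun_prop
  rw [← intervalIntegral.integral_add_adjacent_intervals (hcont.intervalIntegrable 0 x)
    (hcont.intervalIntegrable x 1)]
  have hleft : ∫ y in (0 : ℝ)..x, |y - x| * y ^ k =
      ∫ y in (0 : ℝ)..x, (x * y ^ k - y ^ (k + 1)) := by
    refine intervalIntegral.integral_congr fun y hy => ?_
    rw [uIcc_of_le hx.1] at hy
    simp only [abs_of_nonpos (sub_nonpos.2 hy.2)]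
    ring
  have hright : ∫ y in x..1, |y - x| * y ^ k = ∫ y in x..1, (y ^ (k + 1) - x * y ^ k) := by
    refine intervalIntegral.integral_congr fun y hy => ?_
    rw [uIcc_of_le hx.2] at hy
    simp only [abs_of_nonneg (sub_nonneg.2 hy.1)]
    ring
  have hpow (m : ℕ) (a b : ℝ) : IntervalIntegrable (fun y : ℝ => y ^ m) volume a b :=
    (continuous_pow m).intervalIntegrable a b
  rw [hleft, hright, intervalIntegral.integral_sub ((hpow k 0 x).const_mul x) (hpow (k + 1) 0 x),
    intervalIntegral.integral_sub (hpow (k + 1) x 1) ((hpow k x 1).const_mul x),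
    intervalIntegral.integral_const_mul, intervalIntegral.integral_const_mul, integral_pow,
    integral_pow, integral_pow, integral_pow]
  field_simp
  push_cast
  ring

lemma integral_weight_mul_polyEval {x : ℝ} (hx : x ∈ Icc 0 1) {n : ℕ} (c : Fin n → ℝ) :
    ∫ y in (0 : ℝ)..1, weight x y * polyEval c y =
      ∑ k : Fin n, c k * ((2 - 6 * x * (1 - x)) / (k + 1) -
        3 * (2 * x ^ ((k : ℕ) + 2) / ((k + 1) * (k + 2)) - x / (k + 1) + 1 / (k + 2))) := by
  have hsplit : (fun y => weight x y * polyEval c y) = fun y =>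
      ∑ k, c k * ((2 - 6 * x * (1 - x)) * y ^ (k : ℕ) - 3 * (|y - x| * y ^ (k : ℕ))) := by
    funext y
    simp only [weight, polyEval, Finset.mul_sum]
    exact Finset.sum_congr rfl fun _ _ => by ring
  rw [hsplit, intervalIntegral.integral_finsetSum fun k _ =>
    (by fun_prop : Continuous _).intervalIntegrable _ _]
  refine Finset.sum_congr rfl fun k _ => ?_
  rw [intervalIntegral.integral_const_mul, intervalIntegral.integral_sub
    ((by fun_prop : Continuous _).intervalIntegrable _ _)
    ((by fun_prop : Continuous _).intervalIntegrable _ _), intervalIntegral.integral_const_mul,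
    intervalIntegral.integral_const_mul, integral_pow, integral_abs_sub_mul_pow hx, one_pow,
    zero_pow k.val.succ_ne_zero]
  ring

lemma integral_unitInterval (f : ℝ → ℝ) : ∫ x : I, f x = ∫ x in (0 : ℝ)..1, f x := by
  rw [volume_def, integral_subtype_comap measurableSet_Icc,
    intervalIntegral.integral_of_le zero_le_one, integral_Icc_eq_integral_Ioc]

lemma integralOperator_weight_polyEval {n m : ℕ} (c : Fin n → ℝ) (c' : Fin m → ℝ)
    (h : ∀ x ∈ Icc (0 : ℝ) 1, ∑ k : Fin n, c k * ((2 - 6 * x * (1 - x)) / (k + 1) -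
      3 * (2 * x ^ ((k : ℕ) + 2) / ((k + 1) * (k + 2)) - x / (k + 1) + 1 / (k + 2))) =
        polyEval c' x) :
    integralOperator volume (fun x y : I => weight x y) (fun y : I => polyEval c y) =
      fun x : I => polyEval c' x := by
  funext x
  rw [integralOperator, integral_unitInterval (fun y => weight x y * polyEval c y),
    integral_weight_mul_polyEval x.2, h x x.2]

lemma iterate_integralOperator_weight_one :
    (integralOperator volume (fun x y : I => weight x y))^[4] (fun _ => 1) =
      fun x : I => polyEval ![-1/280, 3/140, 9/280, -3/20, 3/20, 0, -3/20, 9/70, -9/280] x := by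
  have hone : (fun _ : I => (1 : ℝ)) = fun y : I => polyEval ![1] y := by
    funext y; simp [polyEval]
  rw [hone, Function.iterate_succ_apply, integralOperator_weight_polyEval _ ![1/2, -3, 3] ?_,
    Function.iterate_succ_apply, integralOperator_weight_polyEval _ ![0, 0, -3/2, 3, -3/2] ?_,
    Function.iterate_succ_apply,
    integralOperator_weight_polyEval _ ![-1/40, 3/20, -3/10, 0, 3/4, -9/10, 3/10] ?_,
    Function.iterate_succ_apply, Function.iterate_zero_apply,
    integralOperator_weight_polyEval _ _ ?_]
  all_goals
    intro x _
    simp only [polyEval, Fin.sum_univ_succ, Fin.sum_univ_zero, Matrix.cons_val_zero,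
      Matrix.cons_val_succ, Fin.val_zero, Fin.val_succ]
    push_cast
    ring

lemma abs_weight_le {x y : ℝ} (hx : x ∈ Icc 0 1) (hy : y ∈ Icc 0 1) : |weight x y| ≤ 3 := by
  have hxy : |y - x| ≤ 1 := abs_le.2 ⟨by linarith [hx.2, hy.1], by linarith [hx.1, hy.2]⟩
  rw [weight, abs_le]
  constructor <;> nlinarith [abs_nonneg (y - x), hx.1, hx.2, sq_nonneg (2 * x - 1)]

lemma map_projIcc_volume_restrict :
    (volume.restrict (Icc (0 : ℝ) 1)).map (projIcc 0 1 zero_le_one) = (volume : Measure I) := by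
  rw [← measurePreserving_coe.map_eq, Measure.map_map continuous_projIcc.measurable
    measurable_subtype_coe]
  simp [Function.comp_def, projIcc_val]

lemma coe_projIcc_ae_eq {Ω : Type*} [MeasurableSpace Ω] {P : Measure Ω} {X : Ω → ℝ}
    (hX : Measurable X) (hlaw : P.map X = volume.restrict (Icc (0 : ℝ) 1)) :
    ∀ᵐ ω ∂P, (projIcc 0 1 zero_le_one (X ω) : ℝ) = X ω := by
  have hmem : ∀ᵐ ω ∂P, X ω ∈ Icc (0 : ℝ) 1 :=
    ae_of_ae_map hX.aemeasurable (hlaw ▸ ae_restrict_mem measurableSet_Icc)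
  filter_upwards [hmem] with ω hω
  rw [projIcc_of_mem _ hω]

lemma map_projIcc_pi_eq_volume {Ω ι : Type*} [MeasurableSpace Ω] {P : Measure Ω}
    [IsProbabilityMeasure P] [Fintype ι] {U : ι → Ω → ℝ} (hmeas : ∀ i, Measurable (U i))
    (hindep : iIndepFun U P) (hunif : ∀ i, P.map (U i) = volume.restrict (Icc (0 : ℝ) 1)) :
    P.map (fun ω i => projIcc 0 1 zero_le_one (U i ω)) =
      Measure.pi fun _ => (volume : Measure I) := by
  have hproj : Measurable (projIcc (0 : ℝ) 1 zero_le_one) := continuous_projIcc.measurable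
  rw [(iIndepFun_iff_map_fun_eq_pi_map (f := fun i ω => projIcc 0 1 zero_le_one (U i ω))
    fun i => (hproj.comp (hmeas i)).aemeasurable).mp (hindep.comp _ fun _ => hproj)]
  congr with i : 1
  change P.map (projIcc 0 1 zero_le_one ∘ U i) = _
  rw [← Measure.map_map hproj (hmeas i), hunif i, map_projIcc_volume_restrict]

/-- If `U 0, ..., U 4` are i.i.d. uniform on `[0,1]` and
`Wᵢ = 2 - 3|U (i+1) - U i| - 6 U i (1 - U i)` for `i = 0, ..., 3`,
then `E[W₁ W₂ W₃ W₄] = 1/700`. -/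
theorem expectation_W1_W2_W3_W4
    {Ω : Type*} [MeasurableSpace Ω] (P : Measure Ω) [IsProbabilityMeasure P]
    (U : Fin 5 → Ω → ℝ) (hmeas : ∀ i, Measurable (U i))
    (hindep : iIndepFun U P)
    (hunif : ∀ i, Measure.map (U i) P = volume.restrict (Set.Icc (0:ℝ) 1)) :
    ∫ ω, (2 - 3 * |U 1 ω - U 0 ω| - 6 * U 0 ω * (1 - U 0 ω))
        * (2 - 3 * |U 2 ω - U 1 ω| - 6 * U 1 ω * (1 - U 1 ω))
        * (2 - 3 * |U 3 ω - U 2 ω| - 6 * U 2 ω * (1 - U 2 ω))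
        * (2 - 3 * |U 4 ω - U 3 ω| - 6 * U 3 ω * (1 - U 3 ω)) ∂P = 1 / 700 := by
  set V : Fin 5 → Ω → I := fun i ω => projIcc 0 1 zero_le_one (U i ω)
  have hV : ∀ i, Measurable (V i) := fun i => continuous_projIcc.measurable.comp (hmeas i)
  have hW : Measurable (Function.uncurry fun x y : I => weight x y) := by
    unfold weight; fun_prop
  have hWC : ∀ x y : I, ‖weight x y‖ ≤ 3 := fun x y => abs_weight_le x.2 y.2
  calc _ = ∫ ω, pathWeight (fun x y : I => weight x y) (fun i => V i ω) * 1 ∂P := by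
        refine integral_congr_ae ?_
        filter_upwards [ae_all_iff.2 fun i => coe_projIcc_ae_eq (hmeas i) (hunif i)] with ω hω
        simp [pathWeight, Fin.prod_univ_four, weight, V, hω]
    _ = ∫ x, pathWeight (fun x y : I => weight x y) x * 1 ∂Measure.pi fun _ => volume := by
        rw [← map_projIcc_pi_eq_volume hmeas hindep hunif,
          integral_map (measurable_pi_lambda _ hV).aemeasurable]
        exact ((measurable_pathWeight hW 4).mul measurable_const).aestronglyMeasurable
    _ = ∫ x : I, polyEval ![-1/280, 3/140, 9/280, -3/20, 3/20, 0, -3/20, 9/70, -9/280] x := by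
        rw [← iterate_integralOperator_weight_one]
        exact integral_pathWeight_mul volume hW hWC 4 measurable_const (B := 1) fun _ => by simp
    _ = 1 / 700 := by
        rw [integral_unitInterval, integral_polyEval]
        norm_num [Fin.sum_univ_succ]
end

section
/- Let U_1, ..., U_{q+1} be i.i.d. uniform random variables on [0,1] and W_i = 2 - 3|U_{i+1} - U_i| - 6 U_i(1 - U_i) for 1 ≤ i ≤ q. Then the variance of (1/√q) · Σ_{i=1}^q W_i equals 2/5 + 1/(10q). -/
/-!
Write `W_i = w(U_i, U_{i+1})` with `w(x, y) = 2 - 3|y - x| - 6x(1 - x)` and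
`g(x) = 3x² - 3x + 1/2`. Integrating out one variable gives `∫ w(x, y) dy = g(x)` and
`∫ w(x, y) dx = -g(y)`, so `E W_i = 0` and `E W_i² = 1/2`. Since `W_i` and `W_{i+1}` share only
`U_{i+1}`, conditioning on it factorises `E W_i W_{i+1} = -∫ g² = -1/20`, while `W_i` and `W_j`
are independent for `|i - j| ≥ 2`. Hence `Var (∑_{i<q} W_i) = q/2 - (q - 1)/10`.
-/

open MeasureTheory ProbabilityTheory Set Polynomial Finset

theorem integral_eq_eval_sub_eval {f : ℝ → ℝ} (P : ℝ[X]) (hP : ∀ x, P.derivative.eval x = f x)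
    (a b : ℝ) : ∫ x in a..b, f x = P.eval b - P.eval a := by
  simp_rw [← hP]
  exact intervalIntegral.integral_eq_sub_of_hasDerivAt (fun x _ => P.hasDerivAt x)
    (P.derivative.continuous.intervalIntegrable _ _)

theorem integral_abs_sub_of_mem_Icc {a b x : ℝ} (hx : x ∈ Icc a b) :
    ∫ y in a..b, |y - x| = ((x - a) ^ 2 + (b - x) ^ 2) / 2 := by
  have left : ∫ y in a..x, |y - x| = (x - a) ^ 2 / 2 := by
    have h := integral_pow_abs_sub_uIoc (a := x) (b := a) (n := 1)
    rw [uIoc_of_ge hx.1, ← intervalIntegral.integral_of_le hx.1] at h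
    norm_num [abs_sub_comm a x] at h ⊢
    exact h
  have right : ∫ y in x..b, |y - x| = (b - x) ^ 2 / 2 := by
    have h := integral_pow_abs_sub_uIoc (a := x) (b := b) (n := 1)
    rw [uIoc_of_le hx.2, ← intervalIntegral.integral_of_le hx.2] at h
    norm_num at h ⊢
    exact h
  have hint : Continuous fun y => |y - x| := by fun_prop
  rw [← intervalIntegral.integral_add_adjacent_intervals (hint.intervalIntegrable a x)
    (hint.intervalIntegrable x b), left, right]
  ring

theorem Continuous.memLp_of_ae_mem_compact {α E : Type*} [TopologicalSpace α]
    [MeasurableSpace α] [OpensMeasurableSpace α] [NormedAddCommGroup E]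
    [SecondCountableTopologyEither α E] {μ : Measure α} [IsFiniteMeasure μ]
    {f : α → E} (hf : Continuous f) {s : Set α} (hs : IsCompact s) (hμ : ∀ᵐ x ∂μ, x ∈ s)
    (p : ENNReal) : MemLp f p μ := by
  obtain ⟨C, hC⟩ := hs.exists_bound_of_continuousOn hf.continuousOn
  exact MemLp.of_bound hf.aestronglyMeasurable C (hμ.mono hC)

theorem MeasureTheory.Measure.ae_prod_mem_prod {α β : Type*} [MeasurableSpace α]
    [MeasurableSpace β] {μ : Measure α} {ν : Measure β} [SFinite ν] {s : Set α} {t : Set β}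
    (hs : ∀ᵐ x ∂μ, x ∈ s) (ht : ∀ᵐ y ∂ν, y ∈ t) : ∀ᵐ p ∂μ.prod ν, p ∈ s ×ˢ t := by
  filter_upwards [Measure.quasiMeasurePreserving_fst.ae hs,
    Measure.quasiMeasurePreserving_snd.ae ht] with p h₁ h₂
  exact ⟨h₁, h₂⟩

section Banded

variable {Ω : Type*} [MeasurableSpace Ω] {μ : Measure Ω} [IsFiniteMeasure μ]

theorem variance_sum_range_succ_of_banded {X : ℕ → Ω → ℝ} (hX : ∀ i, MemLp (X i) 2 μ) {a b : ℝ}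
    (hvar : ∀ i, Var[X i; μ] = a) (hcov : ∀ i, cov[X i, X (i + 1); μ] = b)
    (hfar : ∀ i j, i + 2 ≤ j → cov[X i, X j; μ] = 0) (n : ℕ) :
    Var[fun ω => ∑ i ∈ range (n + 1), X i ω; μ] = (n + 1) * a + 2 * n * b := by
  induction n with
  | zero => simp [hvar]
  | succ n ih =>
    have hcross : cov[fun ω => ∑ i ∈ range (n + 1), X i ω, X (n + 1); μ] = b := by
      rw [covariance_fun_sum_left' (fun i _ => hX i) (hX _), sum_range_succ,
        sum_eq_zero fun i hi => hfar i (n + 1) (by simp at hi; omega), hcov, zero_add]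
    simp_rw [sum_range_succ _ (n + 1)]
    rw [variance_fun_add (memLp_finsetSum _ fun i _ => hX i) (hX _), ih, hcross, hvar]
    push_cast
    ring

end Banded

section Independence

variable {Ω ι β : Type*} [MeasurableSpace Ω] [MeasurableSpace β] {P : Measure Ω}
  [IsFiniteMeasure P] {U : ι → Ω → β}

theorem ProbabilityTheory.iIndepFun.map_prodMk_eq_prod_map (hindep : iIndepFun U P)
    (hmeas : ∀ i, Measurable (U i)) {i j : ι} (hij : i ≠ j) :
    P.map (fun ω => (U i ω, U j ω)) = (P.map (U i)).prod (P.map (U j)) :=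
  (indepFun_iff_map_prod_eq_prod_map_map (hmeas i).aemeasurable (hmeas j).aemeasurable).1
    (hindep.indepFun hij)

theorem ProbabilityTheory.iIndepFun.map_prodMk_prodMk_eq_prod_map (hindep : iIndepFun U P)
    (hmeas : ∀ i, Measurable (U i)) {i j k : ι} (hij : i ≠ j) (hik : i ≠ k) (hjk : j ≠ k) :
    P.map (fun ω => (U j ω, (U i ω, U k ω))) =
      (P.map (U j)).prod ((P.map (U i)).prod (P.map (U k))) := by
  rw [(indepFun_iff_map_prod_eq_prod_map_map (hmeas j).aemeasurable
    ((hmeas i).prodMk (hmeas k)).aemeasurable).1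
    (hindep.indepFun_prodMk hmeas i k j hij hjk.symm).symm,
    hindep.map_prodMk_eq_prod_map hmeas hik]

end Independence

def blockTerm (p : ℝ × ℝ) : ℝ := 2 - 3 * |p.2 - p.1| - 6 * p.1 * (1 - p.1)

@[fun_prop]
theorem continuous_blockTerm : Continuous blockTerm := by
  unfold blockTerm; fun_prop

theorem blockTerm_mk (x y : ℝ) : blockTerm (x, y) = 2 - 6 * x * (1 - x) - 3 * |y - x| := by
  unfold blockTerm; ring

theorem integral_blockTerm_right {x : ℝ} (hx : x ∈ Icc (0 : ℝ) 1) :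
    ∫ y in (0 : ℝ)..1, blockTerm (x, y) = 3 * x ^ 2 - 3 * x + 1 / 2 := by
  simp_rw [blockTerm_mk]
  rw [intervalIntegral.integral_sub intervalIntegrable_const
    (Continuous.intervalIntegrable (by fun_prop) _ _),
    intervalIntegral.integral_const_mul, integral_abs_sub_of_mem_Icc hx]
  simp only [intervalIntegral.integral_const, smul_eq_mul]
  ring

theorem integral_blockTerm_left {y : ℝ} (hy : y ∈ Icc (0 : ℝ) 1) :
    ∫ x in (0 : ℝ)..1, blockTerm (x, y) = -(3 * y ^ 2 - 3 * y + 1 / 2) := by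
  simp_rw [blockTerm_mk, abs_sub_comm y]
  rw [intervalIntegral.integral_sub (Continuous.intervalIntegrable (by fun_prop) _ _)
    (Continuous.intervalIntegrable (by fun_prop) _ _), intervalIntegral.integral_const_mul,
    integral_abs_sub_of_mem_Icc hy,
    integral_eq_eval_sub_eval (C 2 * X - C 3 * X ^ 2 + C 2 * X ^ 3) (fun x => by simp; ring)]
  simp only [eval_add, eval_sub, eval_mul, eval_C, eval_X, eval_pow]
  ring

theorem integral_blockTerm_sq_right {x : ℝ} (hx : x ∈ Icc (0 : ℝ) 1) :
    ∫ y in (0 : ℝ)..1, blockTerm (x, y) ^ 2 = 1 - 3 * x * (1 - x) := by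
  set a := 2 - 6 * x * (1 - x)
  have expand : ∀ y, blockTerm (x, y) ^ 2 = (a ^ 2 + 9 * (y - x) ^ 2) - 6 * a * |y - x| := by
    intro y; rw [blockTerm_mk]; linear_combination 9 * sq_abs (y - x)
  have sq : ∫ y in (0 : ℝ)..1, (y - x) ^ 2 = ((1 - x) ^ 3 + x ^ 3) / 3 := by
    rw [intervalIntegral.integral_comp_sub_right (fun t => t ^ 2), integral_pow]
    ring
  simp_rw [expand]
  rw [intervalIntegral.integral_sub (Continuous.intervalIntegrable (by fun_prop) _ _)
      (Continuous.intervalIntegrable (by fun_prop) _ _),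
    intervalIntegral.integral_add intervalIntegrable_const
      (Continuous.intervalIntegrable (by fun_prop) _ _),
    intervalIntegral.integral_const_mul, intervalIntegral.integral_const_mul, sq,
    integral_abs_sub_of_mem_Icc hx]
  simp only [intervalIntegral.integral_const, smul_eq_mul, a]
  ring

local notation "μ₀" => (volume.restrict (Icc (0 : ℝ) 1) : Measure ℝ)

theorem integral_restrict_unitInterval (f : ℝ → ℝ) : ∫ x, f x ∂μ₀ = ∫ x in (0 : ℝ)..1, f x := by
  rw [intervalIntegral.integral_of_le zero_le_one, integral_Icc_eq_integral_Ioc]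

theorem ae_mem_unitInterval : ∀ᵐ x ∂μ₀, x ∈ Icc (0 : ℝ) 1 :=
  ae_restrict_mem measurableSet_Icc

theorem memLp_blockTerm (p : ENNReal) : MemLp blockTerm p (Measure.prod μ₀ μ₀) :=
  continuous_blockTerm.memLp_of_ae_mem_compact (isCompact_Icc.prod isCompact_Icc)
    (Measure.ae_prod_mem_prod ae_mem_unitInterval ae_mem_unitInterval) p

theorem integral_blockTerm : ∫ p, blockTerm p ∂(Measure.prod μ₀ μ₀) = 0 := by
  rw [integral_prod _ ((memLp_blockTerm 1).integrable le_rfl)]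
  calc ∫ x, ∫ y, blockTerm (x, y) ∂μ₀ ∂μ₀ = ∫ x, (3 * x ^ 2 - 3 * x + 1 / 2) ∂μ₀ := by
        refine integral_congr_ae ?_
        filter_upwards [ae_mem_unitInterval] with x hx
        rw [integral_restrict_unitInterval, integral_blockTerm_right hx]
    _ = 0 := by
        rw [integral_restrict_unitInterval,
          integral_eq_eval_sub_eval (X ^ 3 - C (3 / 2) * X ^ 2 + C (1 / 2) * X)
            (fun x => by simp; ring)]
        norm_num

theorem integral_blockTerm_sq : ∫ p, blockTerm p ^ 2 ∂(Measure.prod μ₀ μ₀) = 1 / 2 := by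
  rw [integral_prod _ ((memLp_blockTerm 2).integrable_sq)]
  calc ∫ x, ∫ y, blockTerm (x, y) ^ 2 ∂μ₀ ∂μ₀ = ∫ x, (1 - 3 * x * (1 - x)) ∂μ₀ := by
        refine integral_congr_ae ?_
        filter_upwards [ae_mem_unitInterval] with x hx
        rw [integral_restrict_unitInterval, integral_blockTerm_sq_right hx]
    _ = 1 / 2 := by
        rw [integral_restrict_unitInterval,
          integral_eq_eval_sub_eval (X - C (3 / 2) * X ^ 2 + X ^ 3) (fun x => by simp; ring)]
        norm_num

theorem integral_blockTerm_mul_blockTerm :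
    ∫ r, blockTerm (r.2.1, r.1) * blockTerm (r.1, r.2.2) ∂(Measure.prod μ₀ (Measure.prod μ₀ μ₀))
      = -(1 / 20) := by
  have hint : Integrable (fun r : ℝ × ℝ × ℝ => blockTerm (r.2.1, r.1) * blockTerm (r.1, r.2.2))
      (Measure.prod μ₀ (Measure.prod μ₀ μ₀)) :=
    (Continuous.memLp_of_ae_mem_compact (by fun_prop)
      (isCompact_Icc.prod (isCompact_Icc.prod isCompact_Icc))
      (Measure.ae_prod_mem_prod ae_mem_unitInterval
        (Measure.ae_prod_mem_prod ae_mem_unitInterval ae_mem_unitInterval)) 1).integrable le_rfl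
  rw [integral_prod _ hint]
  calc ∫ y, ∫ p, blockTerm (p.1, y) * blockTerm (y, p.2) ∂(Measure.prod μ₀ μ₀) ∂μ₀
        = ∫ y, -(3 * y ^ 2 - 3 * y + 1 / 2) * (3 * y ^ 2 - 3 * y + 1 / 2) ∂μ₀ := by
        refine integral_congr_ae ?_
        filter_upwards [ae_mem_unitInterval] with y hy
        rw [integral_prod_mul (fun x => blockTerm (x, y)) (fun z => blockTerm (y, z)),
          integral_restrict_unitInterval, integral_restrict_unitInterval,
          integral_blockTerm_left hy, integral_blockTerm_right hy]
    _ = -(1 / 20) := by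
        rw [integral_restrict_unitInterval, integral_eq_eval_sub_eval
          (-(C (9 / 5) * X ^ 5 - C (9 / 2) * X ^ 4 + C 4 * X ^ 3 - C (3 / 2) * X ^ 2
            + C (1 / 4) * X)) (fun x => by simp; ring)]
        norm_num

structure IsIIDUnitUniform {Ω : Type*} [MeasurableSpace Ω] (P : Measure Ω) (U : ℕ → Ω → ℝ) :
    Prop where
  measurable : ∀ i, Measurable (U i)
  indep : iIndepFun U P
  map_eq : ∀ i, P.map (U i) = μ₀

-- `blockSeq U i` is the paper's `W_{i+1}`: indices start at `0`.
def blockSeq {Ω : Type*} (U : ℕ → Ω → ℝ) (i : ℕ) (ω : Ω) : ℝ := blockTerm (U i ω, U (i + 1) ω)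

namespace IsIIDUnitUniform

variable {Ω : Type*} [MeasurableSpace Ω] {P : Measure Ω} [IsProbabilityMeasure P]
  {U : ℕ → Ω → ℝ}

theorem map_prodMk (hU : IsIIDUnitUniform P U) {i j : ℕ} (hij : i ≠ j) :
    P.map (fun ω => (U i ω, U j ω)) = Measure.prod μ₀ μ₀ := by
  rw [hU.indep.map_prodMk_eq_prod_map hU.measurable hij, hU.map_eq, hU.map_eq]

theorem integral_comp_prodMk (hU : IsIIDUnitUniform P U) {i j : ℕ} (hij : i ≠ j)
    {f : ℝ × ℝ → ℝ} (hf : Continuous f) :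
    ∫ ω, f (U i ω, U j ω) ∂P = ∫ p, f p ∂(Measure.prod μ₀ μ₀) := by
  rw [← integral_map ((hU.measurable i).prodMk (hU.measurable j)).aemeasurable
    hf.aestronglyMeasurable, hU.map_prodMk hij]

theorem memLp_blockSeq (hU : IsIIDUnitUniform P U) (i : ℕ) : MemLp (blockSeq U i) 2 P := by
  have hlaw := hU.map_prodMk (Nat.ne_add_one i)
  exact (memLp_map_measure_iff (hlaw ▸ continuous_blockTerm.aestronglyMeasurable)
    ((hU.measurable i).prodMk (hU.measurable (i + 1))).aemeasurable).1
    (hlaw ▸ memLp_blockTerm 2)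

theorem integral_blockSeq (hU : IsIIDUnitUniform P U) (i : ℕ) : P[blockSeq U i] = 0 :=
  (hU.integral_comp_prodMk (Nat.ne_add_one i) continuous_blockTerm).trans integral_blockTerm

theorem variance_blockSeq (hU : IsIIDUnitUniform P U) (i : ℕ) :
    Var[blockSeq U i; P] = 1 / 2 := by
  rw [variance_eq_sub (hU.memLp_blockSeq i), hU.integral_blockSeq, zero_pow two_ne_zero,
    sub_zero, ← integral_blockTerm_sq]
  exact hU.integral_comp_prodMk (Nat.ne_add_one i) (f := fun p => blockTerm p ^ 2)
    (by fun_prop)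

theorem covariance_blockSeq_succ (hU : IsIIDUnitUniform P U) (i : ℕ) :
    cov[blockSeq U i, blockSeq U (i + 1); P] = -(1 / 20) := by
  rw [covariance_eq_sub (hU.memLp_blockSeq i) (hU.memLp_blockSeq (i + 1)),
    hU.integral_blockSeq, zero_mul, sub_zero]
  have hF : Continuous fun r : ℝ × ℝ × ℝ => blockTerm (r.2.1, r.1) * blockTerm (r.1, r.2.2) := by
    fun_prop
  have h := integral_map (μ := P) ((hU.measurable (i + 1)).prodMk
    ((hU.measurable i).prodMk (hU.measurable (i + 2)))).aemeasurable hF.aestronglyMeasurable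
  rw [hU.indep.map_prodMk_prodMk_eq_prod_map hU.measurable (by omega) (by omega) (by omega),
    hU.map_eq, hU.map_eq, hU.map_eq, integral_blockTerm_mul_blockTerm] at h
  exact h.symm

theorem covariance_blockSeq_of_add_two_le (hU : IsIIDUnitUniform P U) {i j : ℕ}
    (hij : i + 2 ≤ j) : cov[blockSeq U i, blockSeq U j; P] = 0 :=
  ((hU.indep.indepFun_prodMk_prodMk hU.measurable i (i + 1) j (j + 1) (by omega) (by omega)
    (by omega) (by omega)).comp continuous_blockTerm.measurable
    continuous_blockTerm.measurable).covariance_eq_zero (hU.memLp_blockSeq i)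
    (hU.memLp_blockSeq j)

end IsIIDUnitUniform

/-- If `U 0, U 1, ..., U q` are i.i.d. uniform on `[0,1]` and
`W i = 2 - 3|U (i+1) - U i| - 6 U i (1 - U i)` for `0 ≤ i < q`, then
`Var((1/√q) ∑_{i<q} W i) = 2/5 + 1/(10 q)`. -/
theorem variance_block_sum
    {Ω : Type*} [MeasurableSpace Ω] (P : Measure Ω) [IsProbabilityMeasure P]
    (q : ℕ) (hq : 1 ≤ q)
    (U : ℕ → Ω → ℝ) (hmeas : ∀ i, Measurable (U i))
    (hindep : iIndepFun U P)
    (hunif : ∀ i, Measure.map (U i) P = volume.restrict (Set.Icc (0:ℝ) 1)) :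
    variance
      (fun ω => (Real.sqrt q)⁻¹ *
        ∑ i ∈ Finset.range q,
          (2 - 3 * |U (i+1) ω - U i ω| - 6 * U i ω * (1 - U i ω))) P
      = 2 / 5 + 1 / (10 * q) := by
  have hU : IsIIDUnitUniform P U := ⟨hmeas, hindep, hunif⟩
  obtain ⟨n, rfl⟩ : ∃ n, q = n + 1 := ⟨q - 1, by omega⟩
  change Var[fun ω => (Real.sqrt (n + 1 : ℕ))⁻¹ * ∑ i ∈ range (n + 1), blockSeq U i ω; P] = _
  rw [variance_const_mul, variance_sum_range_succ_of_banded hU.memLp_blockSeq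
    hU.variance_blockSeq hU.covariance_blockSeq_succ
    (fun i j => hU.covariance_blockSeq_of_add_two_le), inv_pow,
    Real.sq_sqrt (Nat.cast_nonneg _)]
  push_cast
  field_simp
  ring
end

section
/- (DKW-type inequality for 1-dependent sequences) Let X_1, ..., X_n be identically distributed random variables in ℝ^k forming a 1-dependent sequence (i.e., (X_i)_{i∈S} and (X_j)_{j∈T} are independent whenever |i - j| ≥ 2 for all i ∈ S, j ∈ T), with common cdf F, and let F_n denote their empirical cdf. Suppose the multivariate DKW inequality holds for i.i.d. samples with constants c_k, c_k'. Then for all ε > 0, P(sup_{t ∈ ℝ^k} |F_n(t) − F(t)| ≥ ε) ≤ 2 c_k exp(−c_k' n ε²/2). -/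
open MeasureTheory ProbabilityTheory

/-- The (population) cdf `F(t) = P(ξ ≤ t)` of a random vector `ξ` in `ℝ^k`. -/
noncomputable def trueCdf {Ω : Type*} [MeasurableSpace Ω] (P : Measure Ω) {k : ℕ}
    (ξ : Ω → Fin k → ℝ) (t : Fin k → ℝ) : ℝ :=
  (P {ω | ∀ d, ξ ω d ≤ t d}).toReal

/-- The Kolmogorov–Smirnov distance `sup_t |F_m(t) - F(t)|` between the empirical cdf
of the sample `Y 0, ..., Y (m-1)` and the cdf of `ξ₀`. -/
noncomputable def ksDist {Ω : Type*} [MeasurableSpace Ω] (P : Measure Ω) {k : ℕ}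
    (Y : ℕ → Ω → Fin k → ℝ) (m : ℕ) (ξ₀ : Ω → Fin k → ℝ) (ω : Ω) : ℝ :=
  ⨆ t : Fin k → ℝ,
    |(m : ℝ)⁻¹ * ∑ i ∈ Finset.range m,
        Set.indicator {ω' | ∀ d, Y i ω' d ≤ t d} (fun _ => (1 : ℝ)) ω
      - trueCdf P ξ₀ t|

/-!
Split the sample into its even- and odd-indexed subsamples, of sizes `⌈n/2⌉` and `⌊n/2⌋`. By
1-dependence each of them is i.i.d., and the count behind `F_n` is the sum of the two subsample
counts, so `n D_n ≤ ⌈n/2⌉ D_even + ⌊n/2⌋ D_odd` for the Kolmogorov–Smirnov distances. With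
`s = ε √(n/2)`, the inequality `√((a+b)/2) (√a + √b) ≤ a + b` shows that `D_n ≥ ε` forces
`D ≥ s / √m` for one of the two subsamples, of size `m`. At that threshold the i.i.d. DKW bound is
`c_k exp(-c_k' s²) = c_k exp(-c_k' n ε² / 2)`, and a union bound over the two subsamples gives
the factor `2`.
-/

open Finset

theorem Finset.sum_range_eq_sum_even_add_sum_odd {M : Type*} [AddCommMonoid M] (f : ℕ → M)
    (n : ℕ) :
    ∑ i ∈ range n, f i
      = ∑ i ∈ range ((n + 1) / 2), f (2 * i) + ∑ i ∈ range (n / 2), f (2 * i + 1) := by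
  induction n with
  | zero => simp
  | succ n ih =>
    rw [sum_range_succ, ih]
    obtain ⟨j, rfl | rfl⟩ := Nat.even_or_odd' n
    · rw [show (2 * j + 1 + 1) / 2 = j + 1 by omega, show (2 * j + 1) / 2 = j by omega,
        show 2 * j / 2 = j by omega, sum_range_succ]
      abel
    · rw [show (2 * j + 1 + 1 + 1) / 2 = j + 1 by omega,
        show (2 * j + 1 + 1) / 2 = j + 1 by omega, show (2 * j + 1) / 2 = j by omega,
        sum_range_succ, sum_range_succ]
      abel

theorem Real.sqrt_half_add_mul_sqrt_add_sqrt_le {a b : ℝ} (ha : 0 ≤ a) (hb : 0 ≤ b) :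
    √((a + b) / 2) * (√a + √b) ≤ a + b := by
  have hsum : √a + √b ≤ 2 * √((a + b) / 2) := by
    rw [← Real.sqrt_sq zero_le_two, ← Real.sqrt_mul (sq_nonneg 2)]
    refine Real.le_sqrt_of_sq_le ?_
    nlinarith [Real.sq_sqrt ha, Real.sq_sqrt hb, sq_nonneg (√a - √b)]
  calc √((a + b) / 2) * (√a + √b) ≤ √((a + b) / 2) * (2 * √((a + b) / 2)) := by gcongr
    _ = a + b := by
      rw [mul_left_comm, Real.mul_self_sqrt (by positivity)]
      ring

theorem le_or_le_of_le_mul_add_mul {a b x y z s : ℝ} (ha : 0 < a) (hb : 0 < b)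
    (h : z ≤ a * x + b * y) (hz : s * √a + s * √b ≤ z) : s / √a ≤ x ∨ s / √b ≤ y := by
  by_contra! hxy
  have hax : a * x < s * √a := by
    calc a * x < a * (s / √a) := by gcongr; exact hxy.1
      _ = s * √a := by rw [mul_div_left_comm, Real.div_sqrt]
  have hby : b * y < s * √b := by
    calc b * y < b * (s / √b) := by gcongr; exact hxy.2
      _ = s * √b := by rw [mul_div_left_comm, Real.div_sqrt]
  linarith

section Independence

variable {Ω β : Type*} [MeasurableSpace Ω] [MeasurableSpace β] {P : Measure Ω}
  [IsProbabilityMeasure P]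

theorem iIndepFun_of_indepFun_finset_of_lt {ι : Type*} [LinearOrder ι] {Y : ι → Ω → β}
    (h : ∀ (s : Finset ι) (a : ι), (∀ i ∈ s, i < a) →
      IndepFun (fun ω (i : s) => Y i ω) (Y a) P) :
    iIndepFun Y P := by
  classical
  rw [iIndepFun_iff_measure_inter_preimage_eq_mul]
  intro s
  induction s using Finset.induction_on_max with
  | empty => simp
  | insert a s hlt ih =>
    intro A hA
    have hpi : (fun ω (i : s) => Y i ω) ⁻¹' Set.univ.pi (fun i => A i)
        = ⋂ i ∈ s, Y i ⁻¹' A i := by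
      ext ω; simp
    have hindep := (indepFun_iff_measure_inter_preimage_eq_mul.mp (h s a hlt))
      (Set.univ.pi fun i => A i) (A a)
      (MeasurableSet.univ_pi fun i => hA i (mem_insert_of_mem i.2))
      (hA a (mem_insert_self a s))
    rw [hpi, ih fun i hi => hA i (mem_insert_of_mem hi)] at hindep
    rw [set_biInter_insert, Set.inter_comm, hindep,
      prod_insert fun ha => (hlt a ha).false, mul_comm]

def OneDependent (X : ℕ → Ω → β) (P : Measure Ω) : Prop :=
  ∀ S T : Finset ℕ, (∀ i ∈ S, ∀ j ∈ T, i + 2 ≤ j ∨ j + 2 ≤ i) →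
    IndepFun (fun ω (i : S) => X i ω) (fun ω (j : T) => X j ω) P

theorem OneDependent.iIndepFun_comp {X : ℕ → Ω → β} (hX : OneDependent X P) {f : ℕ → ℕ}
    (hf : ∀ i j, i < j → f i + 2 ≤ f j) :
    iIndepFun (fun i => X (f i)) P := by
  classical
  refine iIndepFun_of_indepFun_finset_of_lt fun s a hlt => ?_
  have hblocks := hX (s.image f) {f a} fun _ hfi j hj => by
    obtain ⟨i, hi, rfl⟩ := mem_image.mp hfi
    rw [mem_singleton.mp hj]
    exact Or.inl (hf i a (hlt i hi))
  exact hblocks.comp (φ := fun v (i : s) => v ⟨f i, mem_image_of_mem f i.2⟩) (by fun_prop)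
    (measurable_pi_apply (X := fun _ : ({f a} : Finset ℕ) => β) ⟨f a, mem_singleton_self _⟩)

end Independence

section EmpiricalCdf

variable {Ω : Type*} {k : ℕ}

noncomputable def empiricalCdf (Y : ℕ → Ω → Fin k → ℝ) (m : ℕ) (t : Fin k → ℝ) (ω : Ω) : ℝ :=
  (m : ℝ)⁻¹ * ∑ i ∈ range m, Set.indicator {ω' | ∀ d, Y i ω' d ≤ t d} (fun _ => (1 : ℝ)) ω

theorem natCast_mul_empiricalCdf (Y : ℕ → Ω → Fin k → ℝ) (m : ℕ) (t : Fin k → ℝ) (ω : Ω) :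
    m * empiricalCdf Y m t ω
      = ∑ i ∈ range m, Set.indicator {ω' | ∀ d, Y i ω' d ≤ t d} (fun _ => (1 : ℝ)) ω := by
  rcases m.eq_zero_or_pos with rfl | hm
  · simp
  · rw [empiricalCdf, ← mul_assoc, mul_inv_cancel₀ (by positivity), one_mul]

theorem empiricalCdf_nonneg (Y : ℕ → Ω → Fin k → ℝ) (m : ℕ) (t : Fin k → ℝ) (ω : Ω) :
    0 ≤ empiricalCdf Y m t ω :=
  mul_nonneg (by positivity)
    (sum_nonneg fun _ _ => Set.indicator_nonneg (fun _ _ => zero_le_one) _)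

theorem empiricalCdf_le_one (Y : ℕ → Ω → Fin k → ℝ) (m : ℕ) (t : Fin k → ℝ) (ω : Ω) :
    empiricalCdf Y m t ω ≤ 1 := by
  rcases m.eq_zero_or_pos with rfl | hm
  · simp [empiricalCdf]
  rw [← mul_le_mul_iff_of_pos_left (show (0 : ℝ) < m by positivity), natCast_mul_empiricalCdf,
    mul_one]
  simpa using sum_le_card_nsmul (range m) _ (1 : ℝ) fun i _ =>
    Set.indicator_le_self' (fun _ _ => zero_le_one) ω

theorem natCast_mul_empiricalCdf_eq_even_add_odd (X : ℕ → Ω → Fin k → ℝ) (n : ℕ)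
    (t : Fin k → ℝ) (ω : Ω) :
    n * empiricalCdf X n t ω
      = ((n + 1) / 2 : ℕ) * empiricalCdf (fun i => X (2 * i)) ((n + 1) / 2) t ω
        + (n / 2 : ℕ) * empiricalCdf (fun i => X (2 * i + 1)) (n / 2) t ω := by
  simp only [natCast_mul_empiricalCdf]
  exact sum_range_eq_sum_even_add_sum_odd _ n

variable [MeasurableSpace Ω] (P : Measure Ω) [IsProbabilityMeasure P]

theorem abs_empiricalCdf_sub_trueCdf_le_ksDist (Y : ℕ → Ω → Fin k → ℝ) (m : ℕ)
    (ξ : Ω → Fin k → ℝ) (t : Fin k → ℝ) (ω : Ω) :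
    |empiricalCdf Y m t ω - trueCdf P ξ t| ≤ ksDist P Y m ξ ω := by
  refine le_ciSup (f := fun t => |empiricalCdf Y m t ω - trueCdf P ξ t|) ⟨1, ?_⟩ t
  rintro _ ⟨t, rfl⟩
  exact abs_sub_le_of_nonneg_of_le (empiricalCdf_nonneg Y m t ω) (empiricalCdf_le_one Y m t ω)
    measureReal_nonneg measureReal_le_one

theorem natCast_mul_ksDist_le_even_add_odd (X : ℕ → Ω → Fin k → ℝ) (n : ℕ)
    (ξ : Ω → Fin k → ℝ) (ω : Ω) :
    n * ksDist P X n ξ ω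
      ≤ ((n + 1) / 2 : ℕ) * ksDist P (fun i => X (2 * i)) ((n + 1) / 2) ξ ω
        + (n / 2 : ℕ) * ksDist P (fun i => X (2 * i + 1)) (n / 2) ξ ω := by
  rw [ksDist, Real.mul_iSup_of_nonneg n.cast_nonneg]
  refine ciSup_le fun t => ?_
  set F := trueCdf P ξ t
  have hn : (n : ℝ) = ((n + 1) / 2 : ℕ) + (n / 2 : ℕ) := by norm_cast; omega
  have hdecomp : n * (empiricalCdf X n t ω - F)
      = ((n + 1) / 2 : ℕ) * (empiricalCdf (fun i => X (2 * i)) ((n + 1) / 2) t ω - F)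
        + (n / 2 : ℕ) * (empiricalCdf (fun i => X (2 * i + 1)) (n / 2) t ω - F) := by
    rw [mul_sub, natCast_mul_empiricalCdf_eq_even_add_odd, hn]
    ring
  calc n * |empiricalCdf X n t ω - F| = |n * (empiricalCdf X n t ω - F)| := by
        rw [abs_mul, Nat.abs_cast]
    _ ≤ _ := by
        rw [hdecomp]
        refine (abs_add_le _ _).trans ?_
        rw [abs_mul, abs_mul, Nat.abs_cast, Nat.abs_cast]
        gcongr <;> exact abs_empiricalCdf_sub_trueCdf_le_ksDist P _ _ ξ t ω

theorem setOf_le_ksDist_subset_union (X : ℕ → Ω → Fin k → ℝ) {n : ℕ} (hn : 2 ≤ n)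
    (ξ : Ω → Fin k → ℝ) {ε : ℝ} (hε : 0 ≤ ε) :
    {ω | ε ≤ ksDist P X n ξ ω}
      ⊆ {ω | ε * √(n / 2) / √((n + 1) / 2 : ℕ)
              ≤ ksDist P (fun i => X (2 * i)) ((n + 1) / 2) ξ ω}
        ∪ {ω | ε * √(n / 2) / √(n / 2 : ℕ) ≤ ksDist P (fun i => X (2 * i + 1)) (n / 2) ξ ω} := by
  have hthreshold : ε * √(n / 2) * √((n + 1) / 2 : ℕ) + ε * √(n / 2) * √(n / 2 : ℕ) ≤ n * ε := by
    have hn' : (n : ℝ) = ((n + 1) / 2 : ℕ) + (n / 2 : ℕ) := by norm_cast; omega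
    rw [← mul_add, mul_assoc, mul_comm (n : ℝ)]
    gcongr
    rw [hn']
    exact Real.sqrt_half_add_mul_sqrt_add_sqrt_le (Nat.cast_nonneg _) (Nat.cast_nonneg _)
  intro ω (hω : ε ≤ _)
  exact le_or_le_of_le_mul_add_mul (by norm_cast; omega) (by norm_cast; omega)
    ((mul_le_mul_of_nonneg_left hω n.cast_nonneg).trans
      (natCast_mul_ksDist_le_even_add_odd P X n ξ ω)) hthreshold

end EmpiricalCdf

def HasDKWBound {Ω : Type*} [MeasurableSpace Ω] (P : Measure Ω) {k : ℕ} (ξ : Ω → Fin k → ℝ)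
    (ck ck' : ℝ) : Prop :=
  ∀ m : ℕ, 0 < m → ∀ Y : ℕ → Ω → Fin k → ℝ, (∀ i, Measurable (Y i)) → iIndepFun Y P →
    (∀ i, Measure.map (Y i) P = Measure.map ξ P) →
    ∀ ε : ℝ, 0 < ε → (P {ω | ε ≤ ksDist P Y m ξ ω}).toReal ≤ ck * Real.exp (-(ck' * m * ε ^ 2))

theorem HasDKWBound.measureReal_le_of_oneDependent {Ω : Type*} [MeasurableSpace Ω]
    {P : Measure Ω} [IsProbabilityMeasure P] {k : ℕ} {X : ℕ → Ω → Fin k → ℝ} {ck ck' : ℝ}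
    (hDKW : HasDKWBound P (X 0) ck ck') (hX : OneDependent X P)
    (hmeas : ∀ i, Measurable (X i)) (hid : ∀ i, Measure.map (X i) P = Measure.map (X 0) P)
    {f : ℕ → ℕ} (hf : ∀ i j, i < j → f i + 2 ≤ f j) {m : ℕ} (hm : 0 < m) {s : ℝ} (hs : 0 < s) :
    P.real {ω | s / √m ≤ ksDist P (fun i => X (f i)) m (X 0) ω}
      ≤ ck * Real.exp (-(ck' * s ^ 2)) := by
  have h := hDKW m hm _ (fun i => hmeas (f i)) (hX.iIndepFun_comp hf) (fun i => hid (f i))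
    (s / √m) (by positivity)
  have hsize : (m : ℝ) * (s / √m) ^ 2 = s ^ 2 := by
    rw [div_pow, Real.sq_sqrt m.cast_nonneg]
    field_simp
  rwa [mul_assoc, hsize] at h

theorem dkw_one_dependent_general
    {Ω : Type*} [MeasurableSpace Ω] (P : Measure Ω) [IsProbabilityMeasure P]
    (k n : ℕ) (hn : 0 < n) (X : ℕ → Ω → Fin k → ℝ)
    (hmeas : ∀ i, Measurable (X i))
    (hid : ∀ i, Measure.map (X i) P = Measure.map (X 0) P)
    (h1dep : ∀ S T : Finset ℕ,
      (∀ i ∈ S, ∀ j ∈ T, i + 2 ≤ j ∨ j + 2 ≤ i) →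
      IndepFun (fun ω (i : S) => X i ω) (fun ω (j : T) => X j ω) P)
    (ck ck' : ℝ)
    (hDKW : ∀ (m : ℕ), 0 < m → ∀ (Y : ℕ → Ω → Fin k → ℝ),
      (∀ i, Measurable (Y i)) →
      iIndepFun Y P →
      (∀ i, Measure.map (Y i) P = Measure.map (X 0) P) →
      ∀ ε : ℝ, 0 < ε →
        (P {ω | ε ≤ ksDist P Y m (X 0) ω}).toReal
          ≤ ck * Real.exp (-(ck' * m * ε ^ 2))) :
    ∀ ε : ℝ, 0 < ε →
      (P {ω | ε ≤ ksDist P X n (X 0) ω}).toReal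
        ≤ 2 * ck * Real.exp (-(ck' * n * ε ^ 2 / 2)) := by
  intro ε hε
  have hX : OneDependent X P := h1dep
  set s := ε * √(n / 2)
  have hs : 0 < s := by positivity
  have hexponent : ck' * s ^ 2 = ck' * n * ε ^ 2 / 2 := by
    rw [mul_pow, Real.sq_sqrt (by positivity)]
    ring
  have hsubsample {f : ℕ → ℕ} (hf : ∀ i j, i < j → f i + 2 ≤ f j) {m : ℕ} (hm : 0 < m) :=
    hexponent ▸ HasDKWBound.measureReal_le_of_oneDependent hDKW hX hmeas hid hf hm hs
  have hevens := hsubsample (f := (2 * ·)) (fun i j hij => by omega) (m := (n + 1) / 2) (by omega)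
  have hck : 0 ≤ ck :=
    nonneg_of_mul_nonneg_left (measureReal_nonneg.trans hevens) (Real.exp_pos _)
  rw [← measureReal_def]
  obtain rfl | hn2 : n = 1 ∨ 2 ≤ n := by omega
  · -- a single observation is its own even-indexed subsample
    have hs_le : s ≤ ε := mul_le_of_le_one_right hε.le (Real.sqrt_le_one.mpr (by norm_num))
    calc P.real {ω | ε ≤ ksDist P X 1 (X 0) ω}
        ≤ P.real {ω | s / √((1 + 1) / 2 : ℕ) ≤ ksDist P (fun i => X (2 * i)) 1 (X 0) ω} :=
          measureReal_mono fun ω (hω : ε ≤ _) => by simpa [ksDist] using hs_le.trans hω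
      _ ≤ ck * Real.exp (-(ck' * (1 : ℕ) * ε ^ 2 / 2)) := hevens
      _ ≤ 2 * ck * Real.exp (-(ck' * (1 : ℕ) * ε ^ 2 / 2)) := by
          nlinarith [Real.exp_pos (-(ck' * (1 : ℕ) * ε ^ 2 / 2))]
  · calc P.real {ω | ε ≤ ksDist P X n (X 0) ω}
        ≤ _ := measureReal_mono (setOf_le_ksDist_subset_union P X hn2 (X 0) hε.le)
      _ ≤ _ := measureReal_union_le _ _
      _ ≤ _ := add_le_add hevens
          (hsubsample (f := (2 * · + 1)) (fun i j hij => by omega) (m := n / 2) (by omega))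
      _ = 2 * ck * Real.exp (-(ck' * n * ε ^ 2 / 2)) := by ring

/-- DKW-type inequality for 1-dependent sequences: if `X 0, X 1, ...` is a 1-dependent,
identically distributed sequence of random vectors in `ℝ^k` and the multivariate DKW
inequality holds for i.i.d. samples from the same distribution with constants
`ck, ck'`, then `P(sup_t |F_n(t) - F(t)| ≥ ε) ≤ 2 ck exp(-ck' n ε²/2)`. -/
theorem dkw_one_dependent
    {Ω : Type*} [MeasurableSpace Ω] (P : Measure Ω) [IsProbabilityMeasure P]
    (k n : ℕ) (hn : 0 < n) (X : ℕ → Ω → Fin k → ℝ)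
    (hmeas : ∀ i, Measurable (X i))
    (hid : ∀ i, Measure.map (X i) P = Measure.map (X 0) P)
    (h1dep : ∀ S T : Finset ℕ,
      (∀ i ∈ S, ∀ j ∈ T, i + 2 ≤ j ∨ j + 2 ≤ i) →
      IndepFun (fun ω (i : S) => X i ω) (fun ω (j : T) => X j ω) P)
    (ck ck' : ℝ) (hck : 0 < ck) (hck' : 0 < ck')
    (hDKW : ∀ (m : ℕ), 0 < m → ∀ (Y : ℕ → Ω → Fin k → ℝ),
      (∀ i, Measurable (Y i)) →
      iIndepFun Y P →
      (∀ i, Measure.map (Y i) P = Measure.map (X 0) P) →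
      ∀ ε : ℝ, 0 < ε →
        (P {ω | ε ≤ ksDist P Y m (X 0) ω}).toReal
          ≤ ck * Real.exp (-(ck' * m * ε ^ 2))) :
    ∀ ε : ℝ, 0 < ε →
      (P {ω | ε ≤ ksDist P X n (X 0) ω}).toReal
        ≤ 2 * ck * Real.exp (-(ck' * n * ε ^ 2 / 2)) :=
  dkw_one_dependent_general P k n hn X hmeas hid h1dep ck ck' hDKW
end
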